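/- arXiv:2107.12416 — 3 statements merged into one kernel-verified Lean document; each statement's English description precedes it below -/
import Mathlib

section
/- Let A ∈ ℝ^{n×n} with spectral norm ‖A‖ ≤ κ for some κ ∈ (0,1), let Q ∈ ℝ^{n×n} be positive semidefinite, let P = Σ_{t≥0} (Aᵗ)ᵀ Q Aᵗ, let Σ ∈ ℝ^{n×n} be positive definite, and let C > 0 satisfy trace(PΣ) ≤ C. Fix x₀ ∈ ℝ^n and ε′ > 0 with C·‖x₀‖²/(λ_min(Σ)·ε′) ≥ 1. If the integer T satisfies T ≥ (1/(2(1−κ))) · log( C·‖x₀‖² / (λ_min(Σ)·ε′) ), then Σ_{t≥T} x₀ᵀ (Aᵗ)ᵀ Q Aᵗ x₀ ≤ ε′. -/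
/-!
Put `y = A ^ T x₀` (the state after `T` steps) and `P = ∑ₜ (Aᵗ)ᵀ Q Aᵗ`. The tail is `yᵀ P y`,
which is at most `trace(P) ‖y‖² ≤ trace(P) κ^{2T} ‖x₀‖²` because `P ⪯ trace(P) I`. Since
`Σ ⪰ λ_min(Σ) I`, `λ_min(Σ) trace(P) ≤ trace(PΣ) ≤ C`. Finally `κ ≤ exp(κ - 1)` gives
`κ^{2T} ≤ exp(-2T(1 - κ))`, and the choice of `T` makes this at most `λ_min(Σ) ε′ / (C ‖x₀‖²)`.
-/

open Matrix
open scoped Matrix.Norms.L2Operator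

lemma CStarRing.norm_pow_le {E : Type*} [NormedRing E] [StarRing E] [CStarRing E] (a : E)
    (t : ℕ) : ‖a ^ t‖ ≤ ‖a‖ ^ t := by
  rcases t.eq_zero_or_pos with rfl | ht
  · rcases subsingleton_or_nontrivial E with hE | hE
    · simp [Subsingleton.elim (1 : E) 0]
    · simp
  · exact norm_pow_le' a ht

lemma pow_le_exp_mul_sub_one {κ : ℝ} (hκ : 0 ≤ κ) (m : ℕ) : κ ^ m ≤ Real.exp (m * (κ - 1)) := by
  rw [Real.exp_nat_mul]
  exact pow_le_pow_left₀ hκ (by linarith [Real.add_one_le_exp (κ - 1)]) m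

lemma pow_two_mul_mul_le_one_of_log_le {κ R : ℝ} {T : ℕ} (hκ0 : 0 ≤ κ) (hκ1 : κ < 1)
    (hR : 0 < R) (hT : 1 / (2 * (1 - κ)) * Real.log R ≤ T) : κ ^ (2 * T) * R ≤ 1 := by
  have hlog : Real.log R ≤ 2 * T * (1 - κ) := by
    rw [one_div_mul_eq_div, div_le_iff₀ (by linarith)] at hT
    linarith
  calc κ ^ (2 * T) * R ≤ Real.exp ((2 * T : ℕ) * (κ - 1)) * Real.exp (2 * T * (1 - κ)) :=
        mul_le_mul (pow_le_exp_mul_sub_one hκ0 _) ((Real.log_le_iff_le_exp hR).mp hlog) hR.le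
          (Real.exp_pos _).le
    _ = 1 := by rw [← Real.exp_add]; push_cast; ring_nf; exact Real.exp_zero

namespace Matrix

open scoped MatrixOrder

lemma dotProduct_transpose_mul_mul_mulVec {m n R : Type*} [Fintype m] [Fintype n] [CommSemiring R]
    (M : Matrix m n R) (N : Matrix m m R) (x : n → R) :
    x ⬝ᵥ (Mᵀ * N * M) *ᵥ x = (M *ᵥ x) ⬝ᵥ N *ᵥ (M *ᵥ x) := by
  rw [← mulVec_mulVec, ← mulVec_mulVec, dotProduct_mulVec, vecMul_transpose]

lemma dotProduct_self_eq_norm_toLp_sq {n : Type*} [Fintype n] (x : n → ℝ) :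
    x ⬝ᵥ x = ‖WithLp.toLp 2 x‖ ^ 2 := by
  rw [EuclideanSpace.norm_sq_eq]
  simp [dotProduct, sq]

variable {n : Type*} [Fintype n] [DecidableEq n]

lemma IsHermitian.algebraMap_iInf_eigenvalues_le {S : Matrix n n ℝ} (hS : S.IsHermitian) :
    algebraMap ℝ _ (⨅ i, hS.eigenvalues i) ≤ S := by
  rw [algebraMap_le_iff_le_spectrum hS, hS.spectrum_real_eq_range_eigenvalues]
  rintro _ ⟨i, rfl⟩
  exact ciInf_le (Set.finite_range _).bddBelow i

lemma PosSemidef.mul_trace_le_trace_mul {P S : Matrix n n ℝ} {c : ℝ} (hP : P.PosSemidef)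
    (hS : algebraMap ℝ _ c ≤ S) : c * P.trace ≤ (P * S).trace := by
  obtain ⟨B, rfl⟩ := CStarAlgebra.nonneg_iff_eq_star_mul_self.mp hP.nonneg
  have hconj := (le_iff.mp (star_right_conjugate_le_conjugate hS B)).trace_nonneg
  rw [trace_sub, sub_nonneg, Algebra.algebraMap_eq_smul_one, mul_smul_one, smul_mul_assoc,
    trace_smul, smul_eq_mul] at hconj
  rwa [trace_mul_comm (star B), mul_assoc, trace_mul_comm (star B)]

lemma PosSemidef.dotProduct_mulVec_le_trace_mul {P : Matrix n n ℝ} (hP : P.PosSemidef)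
    (v : n → ℝ) : v ⬝ᵥ P *ᵥ v ≤ P.trace * (v ⬝ᵥ v) := by
  have hle : P ≤ algebraMap ℝ _ P.trace := by
    rw [le_algebraMap_iff_spectrum_le hP.1, hP.1.spectrum_real_eq_range_eigenvalues,
      hP.1.trace_eq_sum_eigenvalues]
    rintro _ ⟨i, rfl⟩
    exact Finset.single_le_sum (fun j _ => hP.eigenvalues_nonneg j) (Finset.mem_univ i)
  have := (le_iff.mp hle).dotProduct_mulVec_nonneg v
  rwa [star_trivial, sub_mulVec, dotProduct_sub, sub_nonneg, Algebra.algebraMap_eq_smul_one,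
    smul_mulVec, one_mulVec, dotProduct_smul, smul_eq_mul] at this

lemma l2_opNorm_transpose (A : Matrix n n ℝ) : ‖Aᵀ‖ = ‖A‖ := by
  rw [← conjTranspose_eq_transpose_of_trivial, l2_opNorm_conjTranspose]

lemma norm_toLp_pow_mulVec_le (A : Matrix n n ℝ) (t : ℕ) (x : n → ℝ) :
    ‖WithLp.toLp 2 (A ^ t *ᵥ x)‖ ≤ ‖A‖ ^ t * ‖WithLp.toLp 2 x‖ :=
  (l2_opNorm_mulVec (A ^ t) (WithLp.toLp 2 x)).trans
    (mul_le_mul_of_nonneg_right (CStarRing.norm_pow_le A t) (norm_nonneg _))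

lemma summable_transpose_pow_mul_mul_pow {A : Matrix n n ℝ} (hA : ‖A‖ < 1)
    (Q : Matrix n n ℝ) : Summable fun t : ℕ => (A ^ t)ᵀ * Q * A ^ t := by
  refine .of_norm_bounded ((summable_geometric_of_lt_one (by positivity)
    (pow_lt_one₀ (norm_nonneg A) hA two_ne_zero)).mul_left ‖Q‖) fun t => ?_
  calc ‖(A ^ t)ᵀ * Q * A ^ t‖ ≤ ‖(A ^ t)ᵀ‖ * ‖Q‖ * ‖A ^ t‖ := norm_mul₃_le
    _ = ‖Q‖ * ‖A ^ t‖ ^ 2 := by rw [l2_opNorm_transpose]; ring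
    _ ≤ ‖Q‖ * (‖A‖ ^ 2) ^ t := by
        rw [← pow_mul, mul_comm 2, pow_mul]
        gcongr
        exact CStarRing.norm_pow_le A t

lemma dotProduct_tsum_mulVec {ι : Type*} {f : ι → Matrix n n ℝ} (hf : Summable f)
    (x y : n → ℝ) : x ⬝ᵥ (∑' i, f i) *ᵥ y = ∑' i, x ⬝ᵥ f i *ᵥ y := by
  let L : Matrix n n ℝ →ₗ[ℝ] ℝ :=
    (LinearMap.applyₗ y).comp ((LinearMap.applyₗ x).comp (toLinearMap₂' ℝ).toLinearMap)
  simpa [L, toLinearMap₂'_apply'] using (LinearMap.toContinuousLinearMap L).map_tsum hf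

lemma posSemidef_tsum {ι : Type*} {f : ι → Matrix n n ℝ} (hf : ∀ i, (f i).PosSemidef) :
    (∑' i, f i).PosSemidef := by
  by_cases hs : Summable f
  · refine .of_dotProduct_mulVec_nonneg ?_ fun x => ?_
    · rw [IsHermitian, conjTranspose_tsum]
      exact congrArg tsum (funext fun i => (hf i).1)
    · rw [star_trivial, dotProduct_tsum_mulVec hs]
      exact tsum_nonneg fun i => by simpa using (hf i).dotProduct_mulVec_nonneg x
  · rw [tsum_eq_zero_of_not_summable hs]
    exact .zero

lemma tsum_dotProduct_pow_add_mulVec {A Q : Matrix n n ℝ}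
    (hs : Summable fun t : ℕ => (A ^ t)ᵀ * Q * A ^ t) (T : ℕ) (x : n → ℝ) :
    ∑' t : ℕ, x ⬝ᵥ ((A ^ (T + t))ᵀ * Q * A ^ (T + t)) *ᵥ x =
      (A ^ T *ᵥ x) ⬝ᵥ (∑' t : ℕ, (A ^ t)ᵀ * Q * A ^ t) *ᵥ (A ^ T *ᵥ x) := by
  rw [dotProduct_tsum_mulVec hs]
  refine tsum_congr fun t => ?_
  rw [← dotProduct_transpose_mul_mul_mulVec, add_comm, pow_add, transpose_mul]
  simp only [Matrix.mul_assoc]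

lemma iInf_eigenvalues_mul_tsum_tail_le {A Q Sig : Matrix n n ℝ} {κ C : ℝ} (hA : ‖A‖ ≤ κ)
    (hκ1 : κ < 1) (hQ : Q.PosSemidef) (hSig : Sig.PosSemidef)
    (htr : ((∑' t : ℕ, (A ^ t)ᵀ * Q * A ^ t) * Sig).trace ≤ C) (T : ℕ) (x : n → ℝ) :
    (⨅ i, hSig.1.eigenvalues i) * ∑' t : ℕ, x ⬝ᵥ ((A ^ (T + t))ᵀ * Q * A ^ (T + t)) *ᵥ x ≤
      C * (κ ^ (2 * T) * ‖WithLp.toLp 2 x‖ ^ 2) := by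
  set P := ∑' t : ℕ, (A ^ t)ᵀ * Q * A ^ t
  set y := A ^ T *ᵥ x
  have hs := summable_transpose_pow_mul_mul_pow (hA.trans_lt hκ1) Q
  have hP : P.PosSemidef := posSemidef_tsum fun t => by
    simpa using hQ.conjTranspose_mul_mul_same (A ^ t)
  have hmin : 0 ≤ ⨅ i, hSig.1.eigenvalues i := Real.iInf_nonneg hSig.eigenvalues_nonneg
  have htrP := (hP.mul_trace_le_trace_mul hSig.1.algebraMap_iInf_eigenvalues_le).trans htr
  have hy : y ⬝ᵥ y ≤ κ ^ (2 * T) * ‖WithLp.toLp 2 x‖ ^ 2 := by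
    rw [dotProduct_self_eq_norm_toLp_sq, pow_mul', ← mul_pow]
    gcongr
    exact (norm_toLp_pow_mulVec_le A T x).trans (by gcongr)
  rw [tsum_dotProduct_pow_add_mulVec hs]
  calc (⨅ i, hSig.1.eigenvalues i) * (y ⬝ᵥ P *ᵥ y)
      ≤ (⨅ i, hSig.1.eigenvalues i) * P.trace * (y ⬝ᵥ y) := by
        rw [mul_assoc]
        exact mul_le_mul_of_nonneg_left (hP.dotProduct_mulVec_le_trace_mul y) hmin
    _ ≤ C * (κ ^ (2 * T) * ‖WithLp.toLp 2 x‖ ^ 2) :=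
        mul_le_mul htrP hy (by rw [dotProduct_self_eq_norm_toLp_sq]; positivity)
          ((mul_nonneg hmin hP.trace_nonneg).trans htrP)

end Matrix

theorem stmt_8_general {n : ℕ} (A Q Sig : Matrix (Fin n) (Fin n) ℝ) (κ : ℝ)
    (hκ1 : κ < 1) (hA : ‖A‖ ≤ κ) (hQ : Q.PosSemidef)
    (hSig : Sig.PosDef) (C : ℝ)
    (htr : ((∑' t : ℕ, (A ^ t)ᵀ * Q * (A ^ t)) * Sig).trace ≤ C)
    (x₀ : Fin n → ℝ) (ε' : ℝ) (hε' : 0 < ε')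
    (harg : 1 ≤ C * ‖(WithLp.equiv 2 (Fin n → ℝ)).symm x₀‖ ^ 2 /
      ((⨅ i, hSig.1.eigenvalues i) * ε'))
    (T : ℕ)
    (hT : (1 / (2 * (1 - κ))) *
        Real.log (C * ‖(WithLp.equiv 2 (Fin n → ℝ)).symm x₀‖ ^ 2 /
          ((⨅ i, hSig.1.eigenvalues i) * ε')) ≤ (T : ℝ)) :
    (∑' t : ℕ, x₀ ⬝ᵥ (((A ^ (T + t))ᵀ * Q * (A ^ (T + t))) *ᵥ x₀)) ≤ ε' := by
  set lmin := ⨅ i, hSig.1.eigenvalues i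
  set X := ‖(WithLp.equiv 2 (Fin n → ℝ)).symm x₀‖
  -- `harg` excludes `lmin * ε' = 0`, where the quotient in it would be the junk value `0`.
  have hlmin_ε : 0 < lmin * ε' := by
    refine lt_of_le_of_ne
      (mul_nonneg (Real.iInf_nonneg fun i => (hSig.eigenvalues_pos i).le) hε'.le) fun h => ?_
    rw [← h, div_zero] at harg
    exact zero_lt_one.not_ge harg
  have hlmin : 0 < lmin := pos_of_mul_pos_left hlmin_ε hε'.le
  have hdecay : κ ^ (2 * T) * (C * X ^ 2) ≤ lmin * ε' := by
    have := pow_two_mul_mul_le_one_of_log_le ((norm_nonneg A).trans hA) hκ1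
      (zero_lt_one.trans_le harg) hT
    rwa [mul_div_assoc', div_le_one hlmin_ε] at this
  have htail := iInf_eigenvalues_mul_tsum_tail_le hA hκ1 hQ hSig.posSemidef htr T x₀
  refine le_of_mul_le_mul_left (htail.trans ?_) hlmin
  simpa [X, mul_left_comm] using hdecay

/-- finite-horizon truncation bound, Lemma 6.
If `‖A‖ ≤ κ < 1` (spectral norm), `Q ⪰ 0`, `P = Σ_{t≥0} (Aᵗ)ᵀ Q Aᵗ`, `Σ ≻ 0`,
`trace(PΣ) ≤ C`, and the horizon `T` satisfies
`T ≥ (1/(2(1−κ))) log(C‖x₀‖² / (λ_min(Σ) ε′))` with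
`C‖x₀‖²/(λ_min(Σ)ε′) ≥ 1`, then the tail `Σ_{t≥T} x₀ᵀ (Aᵗ)ᵀ Q Aᵗ x₀` is at most `ε′`. -/
theorem stmt_8 {n : ℕ} (A Q Sig : Matrix (Fin n) (Fin n) ℝ) (κ : ℝ)
    (hκ0 : 0 < κ) (hκ1 : κ < 1) (hA : ‖A‖ ≤ κ) (hQ : Q.PosSemidef)
    (hSig : Sig.PosDef) (C : ℝ) (hC : 0 < C)
    (htr : ((∑' t : ℕ, (A ^ t)ᵀ * Q * (A ^ t)) * Sig).trace ≤ C)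
    (x₀ : Fin n → ℝ) (ε' : ℝ) (hε' : 0 < ε')
    (harg : 1 ≤ C * ‖(WithLp.equiv 2 (Fin n → ℝ)).symm x₀‖ ^ 2 /
      ((⨅ i, hSig.1.eigenvalues i) * ε'))
    (T : ℕ)
    (hT : (1 / (2 * (1 - κ))) *
        Real.log (C * ‖(WithLp.equiv 2 (Fin n → ℝ)).symm x₀‖ ^ 2 /
          ((⨅ i, hSig.1.eigenvalues i) * ε')) ≤ (T : ℝ)) :
    (∑' t : ℕ, x₀ ⬝ᵥ (((A ^ (T + t))ᵀ * Q * (A ^ (T + t))) *ᵥ x₀)) ≤ ε' :=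
  stmt_8_general A Q Sig κ hκ1 hA hQ hSig C htr x₀ ε' hε' harg T hT
end

section
/- Let γ ∈ (0,1], let A_cl ∈ ℝ^{n×n} satisfy ρ(√γ · A_cl) < 1 for the spectral radius ρ, let Q_K ∈ ℝ^{n×n} be positive semidefinite, let Σ ∈ ℝ^{n×n} be positive definite, let c > 0, and let x₀ ∈ ℝ^n satisfy x₀x₀ᵀ ⪯ c·Σ in the Loewner order. Then Σ_{t≥0} γᵗ x₀ᵀ (A_clᵗ)ᵀ Q_K A_clᵗ x₀ ≤ c · Σ_{t≥0} γᵗ trace( (A_clᵗ)ᵀ Q_K A_clᵗ Σ ). -/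
/-!
With `Q_t = (A_clᵗ)ᵀ Q_K A_clᵗ ⪰ 0` and `cΣ - x₀x₀ᵀ ⪰ 0`, the trace of their product is
nonnegative, which is the termwise bound `x₀ᵀ Q_t x₀ ≤ c trace(Q_t Σ)`. The right-hand series
converges because `γᵗ Q_t = (Bᵗ)ᵀ Q_K Bᵗ` for `B = √γ A_cl`, and Gelfand's formula makes `‖Bᵗ‖`
decay geometrically when `ρ(B) < 1`; the left-hand series then converges by comparison.
-/

open Matrix Filter
-- The Frobenius norm is submultiplicative and makes transposition an isometry.
open scoped NNReal ComplexOrder MatrixOrder Matrix.Norms.Frobenius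

section BanachAlgebra

variable {A : Type*} [NormedRing A] [NormedAlgebra ℂ A] [CompleteSpace A]

theorem eventually_norm_pow_le_of_spectralRadius_lt {a : A} {r : ℝ≥0}
    (h : spectralRadius ℂ a < r) : ∀ᶠ n : ℕ in atTop, ‖a ^ n‖ ≤ r ^ n := by
  filter_upwards [(spectrum.pow_nnnorm_pow_one_div_tendsto_nhds_spectralRadius a).eventually_lt_const
    h, eventually_ge_atTop 1] with n hn hn1
  have hn0 : (n : ℝ) ≠ 0 := by positivity
  have := ENNReal.rpow_le_rpow hn.le (by positivity : (0 : ℝ) ≤ n)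
  rw [← ENNReal.rpow_mul, one_div, inv_mul_cancel₀ hn0, ENNReal.rpow_one, ENNReal.rpow_natCast,
    ← ENNReal.coe_pow, ENNReal.coe_le_coe] at this
  exact_mod_cast this

theorem summable_norm_pow_sq_of_spectralRadius_lt_one {a : A} (h : spectralRadius ℂ a < 1) :
    Summable fun n : ℕ => ‖a ^ n‖ ^ 2 := by
  obtain ⟨r, har, hr⟩ := ENNReal.lt_iff_exists_nnreal_btwn.mp h
  have hr1 : (r : ℝ) < 1 := mod_cast hr
  refine Summable.of_norm_bounded_eventually
    (summable_geometric_of_lt_one (by positivity) (pow_lt_one₀ r.2 hr1 two_ne_zero)) ?_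
  rw [Nat.cofinite_eq_atTop]
  filter_upwards [eventually_norm_pow_le_of_spectralRadius_lt har] with n hn
  rw [norm_pow, norm_norm, pow_right_comm]
  exact pow_le_pow_left₀ (norm_nonneg _) hn 2

end BanachAlgebra

namespace Matrix

theorem norm_entry_le_frobenius_norm {m n α : Type*} [Fintype m] [Fintype n]
    [SeminormedAddCommGroup α] (A : Matrix m n α) (i : m) (j : n) : ‖A i j‖ ≤ ‖A‖ :=
  (PiLp.norm_apply_le (WithLp.toLp 2 fun j => A i j) j).trans
    (PiLp.norm_apply_le (WithLp.toLp 2 fun i => WithLp.toLp 2 fun j => A i j) i)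

variable {n : Type*} [Fintype n]

theorem norm_trace_le_card_mul_frobenius_norm {α : Type*} [SeminormedAddCommGroup α]
    (A : Matrix n n α) : ‖A.trace‖ ≤ Fintype.card n * ‖A‖ :=
  calc ‖A.trace‖ ≤ ∑ i, ‖A i i‖ := norm_sum_le _ _
    _ ≤ ∑ _i : n, ‖A‖ := Finset.sum_le_sum fun i _ => norm_entry_le_frobenius_norm A i i
    _ = Fintype.card n * ‖A‖ := by simp

theorem norm_trace_transpose_mul_mul_mul_le (X Q S : Matrix n n ℝ) :
    ‖(Xᵀ * Q * X * S).trace‖ ≤ Fintype.card n * ‖Q‖ * ‖S‖ * ‖X‖ ^ 2 :=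
  calc ‖(Xᵀ * Q * X * S).trace‖ ≤ Fintype.card n * ‖Xᵀ * Q * X * S‖ :=
        norm_trace_le_card_mul_frobenius_norm _
    _ ≤ Fintype.card n * (‖Xᵀ‖ * ‖Q‖ * ‖X‖ * ‖S‖) := by
        gcongr
        refine (frobenius_norm_mul _ _).trans ?_
        gcongr
        refine (frobenius_norm_mul _ _).trans ?_
        gcongr
        exact frobenius_norm_mul _ _
    _ = Fintype.card n * ‖Q‖ * ‖S‖ * ‖X‖ ^ 2 := by rw [frobenius_norm_transpose]; ring

theorem summable_trace_transpose_pow_mul_mul_pow_mul [DecidableEq n] {B : Matrix n n ℝ}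
    (hB : spectralRadius ℂ (B.map (Complex.ofReal : ℝ → ℂ)) < 1) (Q S : Matrix n n ℝ) :
    Summable fun t : ℕ => ((B ^ t)ᵀ * Q * B ^ t * S).trace := by
  refine Summable.of_norm_bounded ((summable_norm_pow_sq_of_spectralRadius_lt_one hB).mul_left
    (Fintype.card n * ‖Q‖ * ‖S‖)) fun t => ?_
  have hmap : (B ^ t).map (Complex.ofReal : ℝ → ℂ) = B.map Complex.ofReal ^ t :=
    map_pow Complex.ofRealHom.mapMatrix B t
  rw [← hmap, frobenius_norm_map_eq _ _ Complex.norm_real]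
  exact norm_trace_transpose_mul_mul_mul_le _ Q S

theorem PosSemidef.trace_mul_nonneg {𝕜 : Type*} [RCLike 𝕜] {M N : Matrix n n 𝕜}
    (hM : M.PosSemidef) (hN : N.PosSemidef) : 0 ≤ (M * N).trace := by
  classical
  obtain ⟨B, rfl⟩ := CStarAlgebra.nonneg_iff_eq_star_mul_self.mp hM.nonneg
  rw [star_eq_conjTranspose, Matrix.mul_assoc, trace_mul_comm]
  exact (hN.mul_mul_conjTranspose_same B).trace_nonneg

theorem dotProduct_mulVec_eq_trace_mul_vecMulVec {R : Type*} [CommSemiring R]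
    (M : Matrix n n R) (x : n → R) : x ⬝ᵥ M *ᵥ x = (M * vecMulVec x x).trace := by
  rw [mul_vecMulVec, trace_vecMulVec, dotProduct_comm]

theorem PosSemidef.dotProduct_mulVec_le_trace_mul_s9 {M P : Matrix n n ℝ} {x : n → ℝ}
    (hM : M.PosSemidef) (hP : (P - vecMulVec x x).PosSemidef) :
    x ⬝ᵥ M *ᵥ x ≤ (M * P).trace := by
  have := hM.trace_mul_nonneg hP
  rwa [Matrix.mul_sub, trace_sub, ← dotProduct_mulVec_eq_trace_mul_vecMulVec, sub_nonneg] at this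

end Matrix

theorem stmt_9_general {n : ℕ} (γ : ℝ) (hγ0 : 0 < γ)
    (Acl QK Sig : Matrix (Fin n) (Fin n) ℝ)
    (hρ : spectralRadius ℂ ((Real.sqrt γ • Acl).map (Complex.ofReal : ℝ → ℂ)) < 1)
    (hQK : QK.PosSemidef)
    (c : ℝ) (x₀ : Fin n → ℝ)
    (hLoewner : (c • Sig - vecMulVec x₀ x₀).PosSemidef) :
    (∑' t : ℕ, γ ^ t * (x₀ ⬝ᵥ (((Acl ^ t)ᵀ * QK * (Acl ^ t)) *ᵥ x₀))) ≤
      c * ∑' t : ℕ, γ ^ t * ((Acl ^ t)ᵀ * QK * (Acl ^ t) * Sig).trace := by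
  set M : ℕ → Matrix (Fin n) (Fin n) ℝ := fun t => (Acl ^ t)ᵀ * QK * Acl ^ t
  have hM (t : ℕ) : (M t).PosSemidef := by
    simpa only [conjTranspose_eq_transpose_of_trivial] using
      hQK.conjTranspose_mul_mul_same (Acl ^ t)
  have hcost (t : ℕ) : γ ^ t * (M t * Sig).trace =
      (((√γ • Acl) ^ t)ᵀ * QK * (√γ • Acl) ^ t * Sig).trace := by
    simp only [smul_pow, transpose_smul, smul_mul, Matrix.mul_smul, trace_smul, smul_eq_mul]
    rw [← mul_assoc, ← mul_pow, Real.mul_self_sqrt hγ0.le]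
  have hterm (t : ℕ) : γ ^ t * (x₀ ⬝ᵥ M t *ᵥ x₀) ≤ c * (γ ^ t * (M t * Sig).trace) := by
    have := (hM t).dotProduct_mulVec_le_trace_mul_s9 hLoewner
    rw [Matrix.mul_smul, trace_smul, smul_eq_mul] at this
    rw [mul_left_comm]
    exact mul_le_mul_of_nonneg_left this (pow_nonneg hγ0.le t)
  have hsum : Summable fun t => c * (γ ^ t * (M t * Sig).trace) := by
    simpa only [hcost] using (summable_trace_transpose_pow_mul_mul_pow_mul hρ QK Sig).mul_left c
  have hnonneg (t : ℕ) : 0 ≤ γ ^ t * (x₀ ⬝ᵥ M t *ᵥ x₀) :=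
    mul_nonneg (pow_nonneg hγ0.le t) ((hM t).dotProduct_mulVec_nonneg x₀)
  calc _ ≤ ∑' t, c * (γ ^ t * (M t * Sig).trace) :=
        (Summable.of_nonneg_of_le hnonneg hterm hsum).tsum_le_tsum hterm hsum
    _ = _ := tsum_mul_left

/-- pathwise cost dominated by averaged cost, Proposition 1(i).
If `ρ(√γ A_cl) < 1`, `Q_K ⪰ 0`, `Σ ≻ 0`, `c > 0` and `x₀ x₀ᵀ ⪯ c Σ` in the Loewner
order, then
`Σ_{t≥0} γᵗ x₀ᵀ (A_clᵗ)ᵀ Q_K A_clᵗ x₀ ≤ c Σ_{t≥0} γᵗ trace((A_clᵗ)ᵀ Q_K A_clᵗ Σ)`. -/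
theorem stmt_9 {n : ℕ} (γ : ℝ) (hγ0 : 0 < γ) (hγ1 : γ ≤ 1)
    (Acl QK Sig : Matrix (Fin n) (Fin n) ℝ)
    (hρ : spectralRadius ℂ ((Real.sqrt γ • Acl).map (Complex.ofReal : ℝ → ℂ)) < 1)
    (hQK : QK.PosSemidef) (hSig : Sig.PosDef)
    (c : ℝ) (hc : 0 < c) (x₀ : Fin n → ℝ)
    (hLoewner : (c • Sig - vecMulVec x₀ x₀).PosSemidef) :
    (∑' t : ℕ, γ ^ t * (x₀ ⬝ᵥ (((Acl ^ t)ᵀ * QK * (Acl ^ t)) *ᵥ x₀))) ≤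
      c * ∑' t : ℕ, γ ^ t * ((Acl ^ t)ᵀ * QK * (Acl ^ t) * Sig).trace :=
  stmt_9_general γ hγ0 Acl QK Sig hρ hQK c x₀ hLoewner
end

section
/- Let 𝒜 ∈ ℝ^{n×n}, ℬ ∈ ℝ^{n×m}, γ ∈ (0,1], and let Q ∈ ℝ^{n×n} be positive definite, R ∈ ℝ^{m×m} positive definite, and Σ ∈ ℝ^{n×n} positive definite. Define 𝕂_s = {K ∈ ℝ^{m×n} : ρ(√γ(𝒜 − ℬK)) < 1} and, for K ∈ 𝕂_s, J(K) = Σ_{t≥0} γᵗ · trace( ((𝒜 − ℬK)ᵗ)ᵀ (Q + KᵀRK) (𝒜 − ℬK)ᵗ Σ ). Then J is coercive on 𝕂_s: for every sequence (K_j) in 𝕂_s converging to a matrix K* with ρ(√γ(𝒜 − ℬK*)) = 1, we have J(K_j) → ∞. -/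
open Matrix Filter
open scoped MatrixOrder


namespace Stmt14

variable {n m p : ℕ}




lemma trace_sq (X : Matrix (Fin n) (Fin n) ℝ) :
    (Xᵀ * X).trace = ∑ j, ∑ i, (X i j) ^ 2 := by
  simp [Matrix.trace, Matrix.diag, Matrix.mul_apply, sq]

lemma trace_sq_nonneg (X : Matrix (Fin n) (Fin n) ℝ) : 0 ≤ (Xᵀ * X).trace := by
  rw [trace_sq]
  positivity

lemma trace_sq_pos {X : Matrix (Fin n) (Fin n) ℝ} (hX : X ≠ 0) : 0 < (Xᵀ * X).trace := by
  rcases lt_or_eq_of_le (trace_sq_nonneg X) with h | h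
  · exact h
  · exfalso; apply hX
    rw [trace_sq] at h
    ext i j
    have h1 : ∀ j' ∈ Finset.univ, (0:ℝ) ≤ ∑ i, (X i j') ^ 2 := by
      intro j' _; positivity
    have h2 := (Finset.sum_eq_zero_iff_of_nonneg h1).1 h.symm j (Finset.mem_univ j)
    have h3 : ∀ i' ∈ Finset.univ, (0:ℝ) ≤ (X i' j) ^ 2 := by intro i' _; positivity
    have := (Finset.sum_eq_zero_iff_of_nonneg h3).1 h2 i (Finset.mem_univ i)
    simpa [pow_eq_zero_iff] using this

/-- diagonal entries of `ZᵀPZ` are quadratic forms in the columns of `Z`. -/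
lemma diag_form (P : Matrix (Fin n) (Fin n) ℝ) (Z : Matrix (Fin n) (Fin m) ℝ) (j : Fin m) :
    (Zᵀ * P * Z) j j = star (fun i => Z i j) ⬝ᵥ (P *ᵥ fun i => Z i j) := by
  simp only [Matrix.mul_apply, Matrix.mulVec, dotProduct, Finset.mul_sum, Finset.sum_mul,
    Matrix.transpose_apply, Pi.star_apply, star_trivial]
  rw [Finset.sum_comm]
  apply Finset.sum_congr rfl; intro i _
  apply Finset.sum_congr rfl; intro k _
  ring

lemma trace_form_nonneg {P : Matrix (Fin n) (Fin n) ℝ} (hP : P.PosSemidef)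
    (Z : Matrix (Fin n) (Fin m) ℝ) : 0 ≤ (Zᵀ * P * Z).trace := by
  rw [Matrix.trace]
  apply Finset.sum_nonneg
  intro j _
  rw [Matrix.diag]
  rw [diag_form]
  exact hP.dotProduct_mulVec_nonneg _

lemma trace_form_pos {P : Matrix (Fin n) (Fin n) ℝ} (hP : P.PosDef)
    {Z : Matrix (Fin n) (Fin m) ℝ} (hZ : Z ≠ 0) : 0 < (Zᵀ * P * Z).trace := by
  obtain ⟨i0, j0, h0⟩ : ∃ i j, Z i j ≠ 0 := by
    by_contra h; push_neg at h; exact hZ (by ext i j; simpa using h i j)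
  rw [Matrix.trace]
  apply Finset.sum_pos'
  · intro j _
    rw [Matrix.diag, diag_form]
    exact hP.posSemidef.dotProduct_mulVec_nonneg _
  · refine ⟨j0, Finset.mem_univ _, ?_⟩
    rw [Matrix.diag, diag_form]
    apply hP.dotProduct_mulVec_pos
    intro h
    exact h0 (congrFun h i0)





lemma transpose_sqrt {Sig : Matrix (Fin n) (Fin n) ℝ} (hSig : Sig.PosDef) :
    (CFC.sqrt Sig)ᵀ = CFC.sqrt Sig := by
  have h := (Matrix.nonneg_iff_posSemidef.1 (CFC.sqrt_nonneg Sig)).1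
  rw [Matrix.IsHermitian, Matrix.conjTranspose_eq_transpose_of_trivial] at h
  exact h

lemma trace_sig_eq {Sig : Matrix (Fin n) (Fin n) ℝ} (hSig : Sig.PosDef)
    (P : Matrix (Fin p) (Fin p) ℝ) (X : Matrix (Fin p) (Fin n) ℝ) :
    (Xᵀ * P * X * Sig).trace
      = ((X * CFC.sqrt Sig)ᵀ * P * (X * CFC.sqrt Sig)).trace := by
  set S := CFC.sqrt Sig with hS
  have h1 : Sig = S * S := (CFC.sqrt_mul_sqrt_self Sig hSig.posSemidef.nonneg).symm
  rw [h1, show Xᵀ * P * X * (S * S) = (Xᵀ * P * X * S) * S by noncomm_ring,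
    Matrix.trace_mul_comm, Matrix.transpose_mul, transpose_sqrt hSig]
  rw [← hS]
  congr 1
  simp [Matrix.mul_assoc]

lemma trace_form_sig_nonneg {P : Matrix (Fin p) (Fin p) ℝ} {Sig : Matrix (Fin n) (Fin n) ℝ}
    (hP : P.PosSemidef) (hSig : Sig.PosDef) (X : Matrix (Fin p) (Fin n) ℝ) :
    0 ≤ (Xᵀ * P * X * Sig).trace := by
  rw [trace_sig_eq hSig]
  exact trace_form_nonneg hP _

lemma trace_form_sig_pos {P : Matrix (Fin p) (Fin p) ℝ} {Sig : Matrix (Fin n) (Fin n) ℝ}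
    (hP : P.PosDef) (hSig : Sig.PosDef) {X : Matrix (Fin p) (Fin n) ℝ} (hX : X ≠ 0) :
    0 < (Xᵀ * P * X * Sig).trace := by
  rw [trace_sig_eq hSig]
  apply trace_form_pos hP
  intro h0
  apply hX
  have hdet : IsUnit Sig.det := isUnit_iff_ne_zero.2 hSig.det_pos.ne'
  have h2 : X * CFC.sqrt Sig * CFC.sqrt Sig = 0 := by rw [h0]; simp
  rw [Matrix.mul_assoc, CFC.sqrt_mul_sqrt_self Sig hSig.posSemidef.nonneg] at h2
  calc X = X * Sig * Sig⁻¹ := by rw [Matrix.mul_assoc, Matrix.mul_nonsing_inv _ hdet, Matrix.mul_one]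
  _ = 0 := by rw [h2, Matrix.zero_mul]





lemma g_smul (a : ℝ) (X : Matrix (Fin n) (Fin n) ℝ) :
    ((a • X)ᵀ * (a • X)).trace = a ^ 2 * (Xᵀ * X).trace := by
  simp [Matrix.transpose_smul, Matrix.smul_mul, Matrix.mul_smul, Matrix.trace_smul,
    smul_eq_mul, smul_smul, sq]

lemma f_smul (P Sig : Matrix (Fin n) (Fin n) ℝ) (a : ℝ) (X : Matrix (Fin n) (Fin n) ℝ) :
    ((a • X)ᵀ * P * (a • X) * Sig).trace = a ^ 2 * (Xᵀ * P * X * Sig).trace := by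
  simp [Matrix.transpose_smul, Matrix.smul_mul, Matrix.mul_smul, Matrix.trace_smul,
    smul_eq_mul, smul_smul, sq]

lemma form_bounds (hn : 0 < n) {P Sig : Matrix (Fin n) (Fin n) ℝ}
    (hP : P.PosDef) (hSig : Sig.PosDef) :
    ∃ c > 0, ∃ C : ℝ, ∀ X : Matrix (Fin n) (Fin n) ℝ,
      c * (Xᵀ * X).trace ≤ (Xᵀ * P * X * Sig).trace ∧
      (Xᵀ * P * X * Sig).trace ≤ C * (Xᵀ * X).trace := by
  classical
  set f : Matrix (Fin n) (Fin n) ℝ → ℝ := fun X => (Xᵀ * P * X * Sig).trace with hf_def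
  set g : Matrix (Fin n) (Fin n) ℝ → ℝ := fun X => (Xᵀ * X).trace with hg_def
  have hg : Continuous g := by
    exact ((continuous_id.matrix_transpose).matrix_mul continuous_id).matrix_trace
  have hf : Continuous f := by
    exact ((((continuous_id.matrix_transpose).matrix_mul continuous_const).matrix_mul
      continuous_id).matrix_mul continuous_const).matrix_trace
  set s : Set (Matrix (Fin n) (Fin n) ℝ) := {X | g X = 1} with hs_def
  -- compactness
  have hBc : IsCompact ((Set.univ.pi fun _ : Fin n => Set.univ.pi fun _ : Fin n =>
      Set.Icc (-1:ℝ) 1) : Set (Matrix (Fin n) (Fin n) ℝ)) :=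
    isCompact_univ_pi fun _ => isCompact_univ_pi fun _ => isCompact_Icc
  have hsub : s ⊆ (Set.univ.pi fun _ : Fin n => Set.univ.pi fun _ : Fin n =>
      Set.Icc (-1:ℝ) 1) := by
    intro X hX
    intro i _
    intro j _
    have h1 : (X i j) ^ 2 ≤ 1 := by
      have h2 : ∑ j', ∑ i', (X i' j') ^ 2 = 1 := by
        have := hX; rw [hs_def] at this; simpa [g, trace_sq] using this
      calc (X i j) ^ 2 ≤ ∑ i', (X i' j) ^ 2 :=
            Finset.single_le_sum (f := fun i' => (X i' j)^2) (fun i' _ => sq_nonneg _)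
              (Finset.mem_univ i)
        _ ≤ ∑ j', ∑ i', (X i' j') ^ 2 :=
            Finset.single_le_sum (f := fun j' => ∑ i', (X i' j')^2)
              (fun j' _ => Finset.sum_nonneg fun i' _ => sq_nonneg _) (Finset.mem_univ j)
        _ = 1 := h2
    constructor
    · nlinarith [sq_nonneg (X i j + 1)]
    · nlinarith [sq_nonneg (X i j - 1)]
  have hclosed : IsClosed s := isClosed_eq hg continuous_const
  have hcomp : IsCompact s := hBc.of_isClosed_subset hclosed hsub
  -- nonempty
  have hne : s.Nonempty := by
    refine ⟨Matrix.single ⟨0, hn⟩ ⟨0, hn⟩ 1, ?_⟩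
    show g _ = 1
    rw [hg_def]
    simp only
    rw [trace_sq]
    rw [Finset.sum_comm]
    simp [Matrix.single, Matrix.of_apply, ite_pow, Finset.sum_ite_eq',
      Finset.filter_and, Finset.filter_eq, Finset.filter_eq']
    rw [Finset.sum_eq_single (⟨0, hn⟩ : Fin n)]
    · simp
    · intro b _ hb
      simp [Ne.symm hb]
    · simp
  obtain ⟨Xm, hXm, hmin⟩ := hcomp.exists_isMinOn hne hf.continuousOn
  obtain ⟨XM, hXM, hmax⟩ := hcomp.exists_isMaxOn hne hf.continuousOn
  have hXm0 : Xm ≠ 0 := by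
    intro h
    have : g Xm = 1 := hXm
    rw [h] at this
    simp [hg_def] at this
  refine ⟨f Xm, trace_form_sig_pos hP hSig hXm0, f XM, fun X => ?_⟩
  rcases eq_or_ne X 0 with rfl | hX0
  · simp [hf_def, hg_def]
  · have hgX : 0 < g X := trace_sq_pos hX0
    set a : ℝ := Real.sqrt (g X) with ha
    have ha0 : 0 < a := Real.sqrt_pos.2 hgX
    set Y : Matrix (Fin n) (Fin n) ℝ := a⁻¹ • X with hY
    have hgY : g Y = 1 := by
      show ((a⁻¹ • X)ᵀ * (a⁻¹ • X)).trace = 1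
      rw [g_smul, ha, inv_pow, Real.sq_sqrt hgX.le]
      exact inv_mul_cancel₀ hgX.ne'
    have hYs : Y ∈ s := hgY
    have hfX : f X = g X * f Y := by
      have : f Y = a⁻¹ ^ 2 * f X := f_smul P Sig a⁻¹ X
      rw [this]
      have ha2 : a ^ 2 = g X := Real.sq_sqrt hgX.le
      field_simp
      rw [← ha2]
    constructor
    · show f Xm * g X ≤ f X
      rw [hfX]
      have h1 : f Xm ≤ f Y := hmin hYs
      calc f Xm * g X ≤ f Y * g X := mul_le_mul_of_nonneg_right h1 hgX.le
        _ = g X * f Y := by ring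
    · show f X ≤ f XM * g X
      rw [hfX]
      have h1 : f Y ≤ f XM := hmax hYs
      calc g X * f Y ≤ g X * f XM := mul_le_mul_of_nonneg_left h1 hgX.le
        _ = f XM * g X := by ring




section Frob

attribute [local instance] Matrix.frobeniusSeminormedAddCommGroup
  Matrix.frobeniusNormedAddCommGroup Matrix.frobeniusNormedSpace
  Matrix.frobeniusNormedRing Matrix.frobeniusNormedAlgebra

lemma trace_sq_eq_norm (X : Matrix (Fin n) (Fin n) ℝ) :
    (Xᵀ * X).trace = ‖X‖ ^ 2 := by
  rw [trace_sq, Matrix.frobenius_norm_def, ← Real.rpow_natCast _ 2, ← Real.rpow_mul (by positivity)]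
  norm_num
  rw [Finset.sum_comm]

lemma map_pow_eq (N : Matrix (Fin n) (Fin n) ℝ) (t : ℕ) :
    (N.map (Complex.ofReal : ℝ → ℂ)) ^ t = (N ^ t).map (Complex.ofReal : ℝ → ℂ) := by
  have h := map_pow (Complex.ofRealHom.mapMatrix (m := Fin n)) N t
  simp only [RingHom.mapMatrix_apply] at h
  exact h.symm

lemma norm_map_pow (N : Matrix (Fin n) (Fin n) ℝ) (t : ℕ) :
    ‖(N.map (Complex.ofReal : ℝ → ℂ)) ^ t‖ = ‖N ^ t‖ := by
  rw [map_pow_eq]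
  exact Matrix.frobenius_norm_map_eq _ _ (fun a => Complex.norm_real a)

set_option maxHeartbeats 1000000 in
/-- Summability of `trace((Nᵗ)ᵀ Nᵗ)` when the spectral radius is `< 1`. -/
lemma summable_trace_pow (N : Matrix (Fin n) (Fin n) ℝ)
    (h : spectralRadius ℂ (N.map (Complex.ofReal : ℝ → ℂ)) < 1) :
    Summable (fun t : ℕ => ((N ^ t)ᵀ * (N ^ t)).trace) := by
  set a := N.map (Complex.ofReal : ℝ → ℂ) with ha
  have hg := spectrum.pow_nnnorm_pow_one_div_tendsto_nhds_spectralRadius a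
  obtain ⟨r, hρr, hr1⟩ := exists_between h
  have hev := hg.eventually_lt_const hρr
  obtain ⟨T, hT⟩ := (eventually_atTop).1 hev
  have hrtop : r ≠ ⊤ := (hr1.trans_le le_top).ne
  set r' : NNReal := r.toNNReal with hr'
  have hr'1 : (r' : ℝ) < 1 := by
    have := (ENNReal.toNNReal_lt_toNNReal (hr1.trans_le le_top).ne ENNReal.one_ne_top).2 hr1
    simpa using this
  have hr'0 : (0:ℝ) ≤ (r' : ℝ) := r'.coe_nonneg
  have key : ∀ t, T + 1 ≤ t → ‖a ^ t‖ ≤ (r' : ℝ) ^ t := by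
    intro t ht
    have h1 : (‖a ^ t‖₊ : ENNReal) ^ (1/(t:ℝ)) ≤ r := (hT t (by omega)).le
    have ht0 : (t : ℝ) ≠ 0 := Nat.cast_ne_zero.2 (by omega)
    have h2 := ENNReal.rpow_le_rpow h1 (by positivity : (0:ℝ) ≤ (t:ℝ))
    rw [← ENNReal.rpow_mul, one_div, inv_mul_cancel₀ ht0, ENNReal.rpow_one,
      ENNReal.rpow_natCast] at h2
    have h4 : ‖a ^ t‖₊ ≤ r' ^ t := by
      have h3 : (‖a ^ t‖₊ : ENNReal) ≤ ((r' ^ t : NNReal) : ENNReal) := by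
        rw [ENNReal.coe_pow, hr', ENNReal.coe_toNNReal hrtop]; exact h2
      exact_mod_cast h3
    calc ‖a ^ t‖ = ((‖a ^ t‖₊ : NNReal) : ℝ) := rfl
      _ ≤ ((r' ^ t : NNReal) : ℝ) := by exact_mod_cast h4
      _ = (r' : ℝ) ^ t := by push_cast; ring
  rw [← summable_nat_add_iff (T + 1)]
  have hnn : ∀ t : ℕ, 0 ≤ ((N ^ (t + (T+1)))ᵀ * N ^ (t + (T+1))).trace := by
    intro t; rw [trace_sq]; positivity
  have hge : Summable (fun t : ℕ => ((r' : ℝ) ^ 2) ^ (T + 1) * ((r' : ℝ) ^ 2) ^ t) := by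
    apply Summable.mul_left
    apply summable_geometric_of_lt_one (by positivity)
    nlinarith
  refine Summable.of_nonneg_of_le hnn (fun t => ?_) hge
  rw [trace_sq_eq_norm, ← norm_map_pow]
  have h5 := key (t + (T+1)) (by omega)
  calc ‖a ^ (t + (T+1))‖ ^ 2 ≤ ((r' : ℝ) ^ (t + (T+1))) ^ 2 := by
        have := norm_nonneg (a ^ (t + (T+1)))
        nlinarith
    _ = ((r' : ℝ) ^ 2) ^ (T + 1) * ((r' : ℝ) ^ 2) ^ t := by ring
/-- Lower bound on `trace` of powers when the spectral radius is `= 1`. -/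
lemma trace_pow_lower (hn : 0 < n) (N : Matrix (Fin n) (Fin n) ℝ)
    (h : spectralRadius ℂ (N.map (Complex.ofReal : ℝ → ℂ)) = 1) (t : ℕ) :
    1 / (n : ℝ) ≤ ((N ^ (t + 1))ᵀ * (N ^ (t + 1))).trace := by
  set a := N.map (Complex.ofReal : ℝ → ℂ) with ha
  have key := spectrum.spectralRadius_le_pow_nnnorm_pow_one_div ℂ a t
  rw [h] at key
  rw [show (1/((t:ℝ)+1)) = (1/(((t+1:ℕ)):ℝ)) by push_cast; ring] at key
  have hmul : (‖a ^ (t+1)‖₊ : ENNReal) ^ (1/(((t+1:ℕ)):ℝ)) * (‖(1 : Matrix (Fin n) (Fin n) ℂ)‖₊ : ENNReal) ^ (1/(((t+1:ℕ)):ℝ))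
      = ((‖a ^ (t+1)‖₊ * ‖(1 : Matrix (Fin n) (Fin n) ℂ)‖₊ : NNReal) : ENNReal) ^ (1/(((t+1:ℕ)):ℝ)) := by
    rw [ENNReal.coe_mul, ENNReal.mul_rpow_of_nonneg _ _ (by positivity)]
  rw [hmul] at key
  have h2 := ENNReal.rpow_le_rpow key (le_of_lt (by positivity : (0:ℝ) < ((t+1 : ℕ) : ℝ)))
  rw [ENNReal.one_rpow, ← ENNReal.rpow_mul, one_div,
    inv_mul_cancel₀ (by positivity : ((t+1 : ℕ) : ℝ) ≠ 0), ENNReal.rpow_one] at h2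
  have h3 : (1 : NNReal) ≤ ‖a ^ (t+1)‖₊ * ‖(1 : Matrix (Fin n) (Fin n) ℂ)‖₊ := by
    exact_mod_cast h2
  have hone : ‖(1 : Matrix (Fin n) (Fin n) ℂ)‖₊ = NNReal.sqrt n := by
    rw [Matrix.frobenius_nnnorm_one]
    simp
  rw [hone] at h3
  have h4 : (1 : ℝ) ≤ ‖a ^ (t+1)‖ * Real.sqrt n := by
    have h4' := (NNReal.coe_le_coe).2 h3
    simpa [Real.coe_sqrt] using h4'
  have hsn : (0:ℝ) < Real.sqrt n := Real.sqrt_pos.2 (by exact_mod_cast hn)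
  have h5 : 1 / Real.sqrt n ≤ ‖a ^ (t+1)‖ := by
    rw [div_le_iff₀ hsn]; linarith
  rw [trace_sq_eq_norm, ← norm_map_pow]
  calc 1 / (n : ℝ) = (1 / Real.sqrt n) ^ 2 := by
        rw [div_pow, one_pow, Real.sq_sqrt (by positivity)]
      _ ≤ ‖a ^ (t+1)‖ ^ 2 := by
        have h6 : (0:ℝ) ≤ 1 / Real.sqrt n := by positivity
        nlinarith
end Frob


end Stmt14

namespace Stmt14

lemma expand_trace {n m : ℕ} (Q : Matrix (Fin n) (Fin n) ℝ) (R : Matrix (Fin m) (Fin m) ℝ)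
    (K : Matrix (Fin m) (Fin n) ℝ) (X Sig : Matrix (Fin n) (Fin n) ℝ) :
    (Xᵀ * (Q + Kᵀ * R * K) * X * Sig).trace
      = (Xᵀ * Q * X * Sig).trace + ((K * X)ᵀ * R * (K * X) * Sig).trace := by
  have h : Xᵀ * (Q + Kᵀ * R * K) * X * Sig
      = Xᵀ * Q * X * Sig + (K * X)ᵀ * R * (K * X) * Sig := by
    simp [Matrix.mul_add, Matrix.add_mul, Matrix.transpose_mul, Matrix.mul_assoc]
  rw [h, Matrix.trace_add]

lemma gam_trace {n : ℕ} {γ : ℝ} (hγ : 0 ≤ γ) (M P Sig : Matrix (Fin n) (Fin n) ℝ) (t : ℕ) :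
    γ ^ t * ((M ^ t)ᵀ * P * (M ^ t) * Sig).trace
      = (((Real.sqrt γ • M) ^ t)ᵀ * P * ((Real.sqrt γ • M) ^ t) * Sig).trace := by
  rw [smul_pow, f_smul, ← pow_mul, show Real.sqrt γ ^ (t * 2) = (Real.sqrt γ ^ 2) ^ t by
    rw [← pow_mul, mul_comm], Real.sq_sqrt hγ]

lemma gam_trace_sq {n : ℕ} {γ : ℝ} (hγ : 0 ≤ γ) (M : Matrix (Fin n) (Fin n) ℝ) (t : ℕ) :
    γ ^ t * ((M ^ t)ᵀ * (M ^ t)).trace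
      = (((Real.sqrt γ • M) ^ t)ᵀ * ((Real.sqrt γ • M) ^ t)).trace := by
  rw [smul_pow, g_smul, ← pow_mul, show Real.sqrt γ ^ (t * 2) = (Real.sqrt γ ^ 2) ^ t by
    rw [← pow_mul, mul_comm], Real.sq_sqrt hγ]

lemma cont_pow {n m : ℕ} (A : Matrix (Fin n) (Fin n) ℝ) (B : Matrix (Fin n) (Fin m) ℝ)
    (γ : ℝ) (k : ℕ) :
    Continuous (fun L : Matrix (Fin m) (Fin n) ℝ => (Real.sqrt γ • (A - B * L)) ^ k) := by
  have hN : Continuous (fun L : Matrix (Fin m) (Fin n) ℝ => Real.sqrt γ • (A - B * L)) :=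
    by fun_prop
  induction k with
  | zero => simpa using continuous_const
  | succ k ih =>
    simp only [pow_succ]
    exact ih.matrix_mul hN

lemma spectralRadius_zero_of_n_eq_zero (M : Matrix (Fin 0) (Fin 0) ℂ) :
    spectralRadius ℂ M = 0 := by
  have hσ : spectrum ℂ M = ∅ := by
    haveI : Subsingleton (Matrix (Fin 0) (Fin 0) ℂ) := ⟨fun a b => by ext i j; exact i.elim0⟩
    ext z
    simp only [Set.mem_empty_iff_false, iff_false, spectrum.mem_iff]
    intro h
    exact h (isUnit_of_subsingleton _)
  simp [spectralRadius, hσ]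

end Stmt14

/-- coercivity of the discounted LQR cost, Lemma 4(i).
With `J(K) = Σ_{t≥0} γᵗ trace(((𝒜−ℬK)ᵗ)ᵀ (Q + KᵀRK) (𝒜−ℬK)ᵗ Σ)` on the Schur-stabilizing
set `𝕂_s = {K : ρ(√γ(𝒜−ℬK)) < 1}`, if a sequence `K_j ∈ 𝕂_s` converges to `K*` with
`ρ(√γ(𝒜−ℬK*)) = 1`, then `J(K_j) → ∞`. -/
theorem stmt_14 {n m : ℕ} (A : Matrix (Fin n) (Fin n) ℝ) (B : Matrix (Fin n) (Fin m) ℝ)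
    (γ : ℝ) (hγ0 : 0 < γ) (hγ1 : γ ≤ 1)
    (Q : Matrix (Fin n) (Fin n) ℝ) (hQ : Q.PosDef)
    (R : Matrix (Fin m) (Fin m) ℝ) (hR : R.PosDef)
    (Sig : Matrix (Fin n) (Fin n) ℝ) (hSig : Sig.PosDef)
    (J : Matrix (Fin m) (Fin n) ℝ → ℝ)
    (hJ : ∀ K, J K = ∑' t : ℕ, γ ^ t *
      ((((A - B * K) ^ t)ᵀ * (Q + Kᵀ * R * K) * ((A - B * K) ^ t)) * Sig).trace)
    (K : ℕ → Matrix (Fin m) (Fin n) ℝ)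
    (hKs : ∀ j, spectralRadius ℂ
      ((Real.sqrt γ • (A - B * K j)).map (Complex.ofReal : ℝ → ℂ)) < 1)
    (Kstar : Matrix (Fin m) (Fin n) ℝ)
    (hlim : Tendsto K atTop (nhds Kstar))
    (hKstar : spectralRadius ℂ
      ((Real.sqrt γ • (A - B * Kstar)).map (Complex.ofReal : ℝ → ℂ)) = 1) :
    Tendsto (fun j => J (K j)) atTop atTop := by
  rcases Nat.eq_zero_or_pos n with hn0 | hn
  · exfalso
    subst hn0
    rw [Stmt14.spectralRadius_zero_of_n_eq_zero] at hKstar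
    simp at hKstar
  -- notation
  set Nf : Matrix (Fin m) (Fin n) ℝ → Matrix (Fin n) (Fin n) ℝ :=
    fun L => Real.sqrt γ • (A - B * L) with hNf
  -- the terms of the series, rewritten
  have hterm : ∀ (L : Matrix (Fin m) (Fin n) ℝ) (t : ℕ),
      γ ^ t * ((((A - B * L) ^ t)ᵀ * (Q + Lᵀ * R * L) * ((A - B * L) ^ t)) * Sig).trace
        = (((Nf L) ^ t)ᵀ * Q * ((Nf L) ^ t) * Sig).trace
          + ((L * (Nf L) ^ t)ᵀ * R * (L * (Nf L) ^ t) * Sig).trace := by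
    intro L t
    rw [← Stmt14.expand_trace]
    exact Stmt14.gam_trace hγ0.le (A - B * L) _ Sig t
  -- nonnegativity of terms and sandwich bounds
  obtain ⟨c, hc, C0, hbounds⟩ := Stmt14.form_bounds hn hQ hSig
  -- lower bound for each term
  have hlow : ∀ (L : Matrix (Fin m) (Fin n) ℝ) (t : ℕ),
      c * (((Nf L) ^ t)ᵀ * ((Nf L) ^ t)).trace
        ≤ γ ^ t * ((((A - B * L) ^ t)ᵀ * (Q + Lᵀ * R * L) * ((A - B * L) ^ t)) * Sig).trace := by
    intro L t
    rw [hterm L t]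
    have h1 := (hbounds ((Nf L) ^ t)).1
    have h2 : 0 ≤ ((L * (Nf L) ^ t)ᵀ * R * (L * (Nf L) ^ t) * Sig).trace :=
      Stmt14.trace_form_sig_nonneg hR.posSemidef hSig _
    linarith
  have htnn : ∀ (L : Matrix (Fin m) (Fin n) ℝ) (t : ℕ),
      0 ≤ γ ^ t * ((((A - B * L) ^ t)ᵀ * (Q + Lᵀ * R * L) * ((A - B * L) ^ t)) * Sig).trace := by
    intro L t
    refine le_trans ?_ (hlow L t)
    have := Stmt14.trace_sq_nonneg (((Nf L) ^ t))
    nlinarith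
  -- summability for each j
  have hsummable : ∀ j, Summable (fun t : ℕ =>
      γ ^ t * ((((A - B * K j) ^ t)ᵀ * (Q + (K j)ᵀ * R * (K j)) * ((A - B * K j) ^ t)) * Sig).trace) := by
    intro j
    have hPj : (Q + (K j)ᵀ * R * (K j)).PosDef := by
      apply hQ.add_posSemidef
      have h := hR.posSemidef.conjTranspose_mul_mul_same (K j)
      rwa [Matrix.conjTranspose_eq_transpose_of_trivial] at h
    obtain ⟨cj, hcj, Cj, hbj⟩ := Stmt14.form_bounds hn hPj hSig
    have hsum0 : Summable (fun t : ℕ => Cj * (((Nf (K j)) ^ t)ᵀ * ((Nf (K j)) ^ t)).trace) :=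
      (Stmt14.summable_trace_pow (Nf (K j)) (hKs j)).mul_left Cj
    refine Summable.of_nonneg_of_le (fun t => htnn (K j) t) (fun t => ?_) hsum0
    rw [show γ ^ t * ((((A - B * K j) ^ t)ᵀ * (Q + (K j)ᵀ * R * (K j)) * ((A - B * K j) ^ t)) * Sig).trace
        = (((Nf (K j)) ^ t)ᵀ * (Q + (K j)ᵀ * R * (K j)) * ((Nf (K j)) ^ t) * Sig).trace
      from Stmt14.gam_trace hγ0.le (A - B * K j) _ Sig t]
    exact (hbj ((Nf (K j)) ^ t)).2
  -- main estimate
  rw [tendsto_atTop]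
  intro b
  have hcn : (0:ℝ) < c / n := div_pos hc (by exact_mod_cast hn)
  obtain ⟨T, hT⟩ := exists_nat_ge ((b + 1) / (c / n))
  -- the continuous lower-bound functional
  set φ : Matrix (Fin m) (Fin n) ℝ → ℝ := fun L =>
    ∑ t ∈ Finset.range (T + 1), c * (((Nf L) ^ (t + 1))ᵀ * ((Nf L) ^ (t + 1))).trace with hφ
  have hφcont : Continuous φ := by
    apply continuous_finset_sum
    intro t _
    have h := Stmt14.cont_pow A B γ (t + 1)
    exact continuous_const.mul ((h.matrix_transpose.matrix_mul h).matrix_trace)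
  have hφlim : Tendsto (fun j => φ (K j)) atTop (nhds (φ Kstar)) :=
    (hφcont.tendsto Kstar).comp hlim
  have hφstar : b + 1 ≤ φ Kstar := by
    have hterm1 : ∀ t ∈ Finset.range (T + 1),
        c * (1 / (n:ℝ)) ≤ c * (((Nf Kstar) ^ (t + 1))ᵀ * ((Nf Kstar) ^ (t + 1))).trace := by
      intro t _
      exact mul_le_mul_of_nonneg_left (Stmt14.trace_pow_lower hn (Nf Kstar) hKstar t) hc.le
    calc b + 1 ≤ ((b+1)/(c/n)) * (c/n) := by
          rw [div_mul_cancel₀ _ hcn.ne']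
      _ ≤ (T:ℝ) * (c/n) := mul_le_mul_of_nonneg_right hT (le_of_lt hcn)
      _ ≤ ((T:ℝ) + 1) * (c * (1/n)) := by
          rw [div_eq_mul_one_div] at *
          nlinarith [hcn]
      _ ≤ φ Kstar := by
          rw [hφ]
          have := Finset.card_nsmul_le_sum (Finset.range (T+1))
            (fun t => c * (((Nf Kstar) ^ (t + 1))ᵀ * ((Nf Kstar) ^ (t + 1))).trace)
            (c * (1/(n:ℝ))) hterm1
          simpa [Finset.card_range, nsmul_eq_mul, add_comm] using this
  have hev : ∀ᶠ j in atTop, b + 1 ≤ φ (K j) + 1 := by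
    have : ∀ᶠ j in atTop, b ≤ φ (K j) := hφlim.eventually (eventually_ge_nhds (by linarith))
    filter_upwards [this] with j hj
    linarith
  filter_upwards [hev] with j hj
  -- J (K j) ≥ φ (K j) ≥ b
  have hφle : φ (K j) ≤ J (K j) := by
    rw [hJ]
    have hpart : ∑ t ∈ Finset.range (T + 2),
        γ ^ t * ((((A - B * K j) ^ t)ᵀ * (Q + (K j)ᵀ * R * (K j)) * ((A - B * K j) ^ t)) * Sig).trace
        ≤ ∑' t : ℕ, γ ^ t * ((((A - B * K j) ^ t)ᵀ * (Q + (K j)ᵀ * R * (K j)) * ((A - B * K j) ^ t)) * Sig).trace :=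
      (hsummable j).sum_le_tsum _ (fun t _ => htnn (K j) t)
    refine le_trans ?_ hpart
    rw [Finset.sum_range_succ']
    have h0 : 0 ≤ γ ^ 0 * ((((A - B * K j) ^ 0)ᵀ * (Q + (K j)ᵀ * R * (K j)) * ((A - B * K j) ^ 0)) * Sig).trace :=
      htnn (K j) 0
    have hsum : φ (K j) ≤ ∑ t ∈ Finset.range (T + 1),
        γ ^ (t+1) * ((((A - B * K j) ^ (t+1))ᵀ * (Q + (K j)ᵀ * R * (K j)) * ((A - B * K j) ^ (t+1))) * Sig).trace := by
      rw [hφ]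
      apply Finset.sum_le_sum
      intro t _
      exact hlow (K j) (t+1)
    linarith
  linarith
end
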